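/- arXiv:1009.1108 — 7 statements merged into one kernel-verified Lean document; each statement's English description precedes it below -/
import Mathlib

section
/- Let Y be a 2n×2n real symmetric matrix and Σ a 2n×2n real skew-symmetric matrix with Y - iΣ positive semidefinite. Then ker Y = ker Σ ∩ ker(Y - iΣ), where all kernels are over ℂ^{2n}. -/
open Matrix Complex ComplexOrder

/-!
Write `M = Y - iΣ`. Since `Y` and `Σ` are real, `Mᵀ = Y + iΣ` is the entrywise conjugate of `M`,
hence positive semidefinite as well, and `M + Mᵀ = 2Y`. The kernel of a sum of two positive
semidefinite matrices is the intersection of their kernels, so `Y w = 0` forces `M w = 0`, and then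
`iΣ w = Y w - M w = 0`. The converse is immediate from `Y = M + iΣ`.
-/

namespace Matrix

theorem PosSemidef.mulVec_eq_zero_of_add_mulVec_eq_zero {ι 𝕜 : Type*} [Fintype ι] [RCLike 𝕜]
    {A B : Matrix ι ι 𝕜} (hA : A.PosSemidef) (hB : B.PosSemidef) {x : ι → 𝕜} (h : (A + B) *ᵥ x = 0) :
    A *ᵥ x = 0 := by
  have hsum : star x ⬝ᵥ A *ᵥ x + star x ⬝ᵥ B *ᵥ x = 0 := by
    rw [← dotProduct_add, ← add_mulVec, h, dotProduct_zero]
  have hAx := ((add_eq_zero_iff_of_nonneg (hA.dotProduct_mulVec_nonneg x)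
    (hB.dotProduct_mulVec_nonneg x)).mp hsum).1
  exact (hA.dotProduct_mulVec_zero_iff x).mp hAx

theorem map_ofReal_sub_I_smul_add_transpose {ι : Type*} {Y Sg : Matrix ι ι ℝ}
    (hY : Y.IsSymm) (hSg : Sgᵀ = -Sg) :
    (Y.map ofReal - I • Sg.map ofReal) + (Y.map ofReal - I • Sg.map ofReal)ᵀ =
      (2 : ℂ) • Y.map ofReal := by
  have hSgc : (Sg.map ofReal)ᵀ = -Sg.map ofReal := by
    rw [← transpose_map, hSg]
    ext i j
    simp
  rw [transpose_sub, transpose_smul, ← transpose_map, hY.eq, hSgc]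
  module

end Matrix

/-- If `Y` is real symmetric, `Sg` real skew-symmetric, and `Y - i·Sg`
is positive semidefinite, then `ker Y = ker Sg ∩ ker (Y - i·Sg)` over `ℂ^{2n}`. -/
theorem kernel_Y_eq_inter (n : ℕ)
    (Y Sg : Matrix (Fin (2 * n)) (Fin (2 * n)) ℝ)
    (hY : Y.IsSymm)
    (hSg : Sgᵀ = -Sg)
    (h : ((Y.map Complex.ofReal) - Complex.I • (Sg.map Complex.ofReal)).PosSemidef) :
    ∀ w : Fin (2 * n) → ℂ,
      (Y.map Complex.ofReal).mulVec w = 0 ↔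
        ((Sg.map Complex.ofReal).mulVec w = 0 ∧
         ((Y.map Complex.ofReal) - Complex.I • (Sg.map Complex.ofReal)).mulVec w = 0) := by
  intro w
  have hsplit : (Y.map ofReal - I • Sg.map ofReal) *ᵥ w =
      Y.map ofReal *ᵥ w - I • Sg.map ofReal *ᵥ w := by
    rw [sub_mulVec, smul_mulVec]
  constructor
  · intro hYw
    have hMw := h.mulVec_eq_zero_of_add_mulVec_eq_zero h.transpose (x := w) (by
      rw [map_ofReal_sub_I_smul_add_transpose hY hSg, smul_mulVec, hYw, smul_zero])
    refine ⟨?_, hMw⟩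
    rw [hsplit, hYw, zero_sub, neg_eq_zero, smul_eq_zero] at hMw
    exact hMw.resolve_left I_ne_zero
  · rintro ⟨hSw, hMw⟩
    rwa [hsplit, hSw, smul_zero, sub_zero] at hMw
end

section
/- Let A be an m×m real symmetric positive semidefinite matrix and B an m×m real skew-symmetric matrix with A - iB positive semidefinite (over ℂ). Then 2·rank(A - iB) = rank(A) + rank(A - B A^⊖ B^T), where A^⊖ denotes the Moore–Penrose pseudoinverse of A and ranks are over ℂ. -/
open Matrix Complex ComplexOrder

/-- The four Penrose conditions characterizing the Moore–Penrose pseudoinverse of a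
real square matrix. -/
def IsMoorePenroseInv {m : ℕ} (A Ap : Matrix (Fin m) (Fin m) ℝ) : Prop :=
  A * Ap * A = A ∧ Ap * A * Ap = Ap ∧ (A * Ap)ᵀ = A * Ap ∧ (Ap * A)ᵀ = Ap * A

section Aux

noncomputable def prodE {K M N : Type*} [Field K] [AddCommGroup M] [Module K M] [AddCommGroup N]
    [Module K N] (p : Submodule K M) (q : Submodule K N) : (p.prod q) ≃ₗ[K] p × q where
  toFun x := (⟨x.1.1, x.2.1⟩, ⟨x.1.2, x.2.2⟩)
  invFun y := ⟨(y.1.1, y.2.1), ⟨y.1.2, y.2.2⟩⟩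
  map_add' _ _ := rfl
  map_smul' _ _ := rfl
  left_inv _ := rfl
  right_inv _ := rfl

lemma range_prodMap' {K M N P Q : Type*} [Field K] [AddCommGroup M] [Module K M] [AddCommGroup N]
    [Module K N] [AddCommGroup P] [Module K P] [AddCommGroup Q] [Module K Q]
    (f : M →ₗ[K] P) (g : N →ₗ[K] Q) :
    LinearMap.range (f.prodMap g) = (LinearMap.range f).prod (LinearMap.range g) := by
  ext x
  constructor
  · rintro ⟨y, rfl⟩; exact ⟨⟨y.1, rfl⟩, ⟨y.2, rfl⟩⟩
  · rintro ⟨⟨a, ha⟩, ⟨b, hb⟩⟩; exact ⟨(a, b), Prod.ext ha hb⟩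

lemma rank_fromBlocks_diag {K : Type*} [Field K] {m n : ℕ}
    (X : Matrix (Fin m) (Fin m) K) (Y : Matrix (Fin n) (Fin n) K) :
    (fromBlocks X 0 0 Y).rank = X.rank + Y.rank := by
  classical
  let e := LinearEquiv.sumArrowLequivProdArrow (Fin m) (Fin n) K K
  have key : (fromBlocks X 0 0 Y).mulVecLin
      = (e.symm : _ →ₗ[K] _) ∘ₗ (X.mulVecLin.prodMap Y.mulVecLin) ∘ₗ (e : _ →ₗ[K] _) := by
    apply LinearMap.ext
    intro v
    have hv : v = Sum.elim (v ∘ Sum.inl) (v ∘ Sum.inr) := by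
      funext s; cases s <;> rfl
    simp only [LinearMap.comp_apply, mulVecLin_apply, LinearEquiv.coe_coe]
    rw [hv, fromBlocks_mulVec]
    simp [e, LinearEquiv.sumArrowLequivProdArrow]
    rfl
  rw [Matrix.rank, key, LinearMap.range_comp, LinearMap.range_comp,
    LinearEquiv.range, Submodule.map_top, LinearEquiv.finrank_map_eq,
    range_prodMap', Matrix.rank, Matrix.rank, ← Module.finrank_prod]
  exact (prodE _ _).finrank_eq

lemma map_ofReal_mul {m n k : ℕ} (X : Matrix (Fin m) (Fin n) ℝ) (Y : Matrix (Fin n) (Fin k) ℝ) :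
    (X * Y).map Complex.ofReal = X.map Complex.ofReal * Y.map Complex.ofReal := by
  ext i j; simp [Matrix.mul_apply]

lemma mul_eq_zero_of_ker {m : ℕ} (A B C : Matrix (Fin m) (Fin m) ℝ)
    (hker : ∀ x : Fin m → ℝ, A *ᵥ x = 0 → B *ᵥ x = 0) (hAC : A * C = 0) : B * C = 0 := by
  ext i j
  have hv : A *ᵥ (fun k => C k j) = 0 := by
    funext i'
    have := congrFun (congrFun hAC i') j
    simpa [Matrix.mul_apply, Matrix.mulVec, dotProduct] using this
  have := congrFun (hker _ hv) i
  simpa [Matrix.mul_apply, Matrix.mulVec, dotProduct] using this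

lemma ker_incl {m : ℕ} (A B : Matrix (Fin m) (Fin m) ℝ)
    (hB : Bᵀ = -B)
    (h : ((A.map Complex.ofReal) - Complex.I • (B.map Complex.ofReal)).PosSemidef) :
    ∀ x : Fin m → ℝ, A *ᵥ x = 0 → B *ᵥ x = 0 := by
  intro x hx
  set y : Fin m → ℂ := fun i => (x i : ℂ) with hy
  have hAy : (A.map Complex.ofReal) *ᵥ y = 0 := by
    funext i
    have := congrFun hx i
    simp only [Matrix.mulVec, dotProduct, Matrix.map_apply, hy, Pi.zero_apply] at this ⊢
    exact_mod_cast congrArg Complex.ofReal this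
  have hxBx : x ⬝ᵥ (B *ᵥ x) = 0 := by
    have h2 : x ⬝ᵥ (B *ᵥ x) = -(x ⬝ᵥ (B *ᵥ x)) := by
      calc x ⬝ᵥ (B *ᵥ x) = (x ᵥ* B) ⬝ᵥ x := Matrix.dotProduct_mulVec x B x
        _ = (Bᵀ *ᵥ x) ⬝ᵥ x := by rw [Matrix.mulVec_transpose]
        _ = (-(B *ᵥ x)) ⬝ᵥ x := by rw [hB, Matrix.neg_mulVec]
        _ = -(x ⬝ᵥ (B *ᵥ x)) := by rw [neg_dotProduct, dotProduct_comm]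
    linarith
  have hquad : star y ⬝ᵥ ((A.map Complex.ofReal - Complex.I • B.map Complex.ofReal) *ᵥ y) = 0 := by
    rw [Matrix.sub_mulVec, Matrix.smul_mulVec, hAy, zero_sub, dotProduct_neg,
      dotProduct_smul]
    have : star y ⬝ᵥ (B.map Complex.ofReal *ᵥ y) = ((x ⬝ᵥ (B *ᵥ x) : ℝ) : ℂ) := by
      simp only [dotProduct, Matrix.mulVec, Matrix.map_apply, hy, Pi.star_apply]
      push_cast
      simp [Complex.conj_ofReal]
    rw [this, hxBx]
    simp
  have hMy := (h.dotProduct_mulVec_zero_iff y).mp hquad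
  rw [Matrix.sub_mulVec, Matrix.smul_mulVec, hAy, zero_sub, neg_eq_zero,
    smul_eq_zero] at hMy
  rcases hMy with h1 | h2
  · exact absurd h1 Complex.I_ne_zero
  · funext i
    have := congrFun h2 i
    simp only [Matrix.mulVec, dotProduct, Matrix.map_apply, hy, Pi.zero_apply] at this ⊢
    exact_mod_cast this

end Aux

/-- For `A` real symmetric PSD and `B` real skew-symmetric with `A - iB`
positive semidefinite, `2·rank(A - iB) = rank A + rank (A - B A⁻ Bᵀ)` where `A⁻` is the
Moore–Penrose inverse of `A`, ranks over `ℂ`. -/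
theorem two_mul_rank_sub_i_smul (m : ℕ) (A B Ap : Matrix (Fin m) (Fin m) ℝ)
    (hA : (A.map Complex.ofReal).PosSemidef)
    (hB : Bᵀ = -B)
    (h : ((A.map Complex.ofReal) - Complex.I • (B.map Complex.ofReal)).PosSemidef)
    (hAp : IsMoorePenroseInv A Ap) :
    2 * ((A.map Complex.ofReal) - Complex.I • (B.map Complex.ofReal)).rank =
      (A.map Complex.ofReal).rank + ((A - B * Ap * Bᵀ).map Complex.ofReal).rank := by
  classical
  obtain ⟨h1, h2, h3, h4⟩ := hAp
  -- symmetry of A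
  have hsym : Aᵀ = A := by
    ext i j
    have := congrFun (congrFun hA.1 i) j
    simp only [conjTranspose_apply, Matrix.map_apply, star_def, Complex.conj_ofReal] at this
    exact_mod_cast this
  -- kernel inclusion
  have hker := ker_incl A B hB h
  -- real Moore-Penrose consequences
  have step1 : A * (1 - Ap * A) = 0 := by
    rw [mul_sub, mul_one, ← mul_assoc, h1, sub_self]
  have hBApA : B * Ap * A = B := by
    have := mul_eq_zero_of_ker A B _ hker step1
    rw [mul_sub, mul_one, ← mul_assoc] at this
    exact (sub_eq_zero.mp this).symm
  have step3 : A * (1 - A * Ap) = 0 := by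
    have ht : (A * (1 - A * Ap))ᵀ = 0 := by
      rw [transpose_mul, transpose_sub, transpose_one, h3, hsym, sub_mul, one_mul, h1, sub_self]
    have := congrArg transpose ht
    rwa [transpose_transpose, transpose_zero] at this
  have hBAAp : B * (A * Ap) = B := by
    have := mul_eq_zero_of_ker A B _ hker step3
    rw [mul_sub, mul_one] at this
    exact (sub_eq_zero.mp this).symm
  have hAApB : A * Ap * B = B := by
    have ht : (A * Ap * B)ᵀ = Bᵀ := by
      rw [transpose_mul, h3, hB, neg_mul, hBAAp]
    have := congrArg transpose ht
    rwa [transpose_transpose, transpose_transpose] at this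
  -- complex versions
  set A' : Matrix (Fin m) (Fin m) ℂ := A.map Complex.ofReal with hA'
  set B' : Matrix (Fin m) (Fin m) ℂ := B.map Complex.ofReal with hB'
  set P' : Matrix (Fin m) (Fin m) ℂ := Ap.map Complex.ofReal with hP'
  have cAApB : A' * P' * B' = B' := by
    rw [hA', hB', hP', ← map_ofReal_mul, ← map_ofReal_mul, hAApB]
  have cBApA : B' * P' * A' = B' := by
    rw [hA', hB', hP', ← map_ofReal_mul, ← map_ofReal_mul]
    rw [Matrix.mul_assoc] at hBApA ⊢
    rw [hBApA]
  have c2 : P' * A' * P' = P' := by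
    rw [hA', hP', ← map_ofReal_mul, ← map_ofReal_mul, h2]
  set Mc : Matrix (Fin m) (Fin m) ℂ := A' - Complex.I • B' with hMc
  set Nc : Matrix (Fin m) (Fin m) ℂ := A' + Complex.I • B' with hNc
  set S' : Matrix (Fin m) (Fin m) ℂ := A' + B' * P' * B' with hS'
  -- target matrix equals S'
  have hTarget : (A - B * Ap * Bᵀ).map Complex.ofReal = S' := by
    have : A - B * Ap * Bᵀ = A + B * Ap * B := by
      rw [hB, Matrix.mul_neg, sub_neg_eq_add]
    rw [this, hS', hA', hB', hP']
    ext i j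
    simp only [Matrix.map_apply, Matrix.add_apply]
    push_cast
    rw [← map_ofReal_mul, ← map_ofReal_mul]
    simp [Matrix.map_apply]
  -- the block matrix
  set T : Matrix (Fin m ⊕ Fin m) (Fin m ⊕ Fin m) ℂ := fromBlocks A' (-B') B' A' with hT
  -- Schur factorization
  set L : Matrix (Fin m ⊕ Fin m) (Fin m ⊕ Fin m) ℂ := fromBlocks 1 0 (B' * P') 1 with hL
  set R : Matrix (Fin m ⊕ Fin m) (Fin m ⊕ Fin m) ℂ := fromBlocks 1 (-(P' * B')) 0 1 with hR
  set Dm : Matrix (Fin m ⊕ Fin m) (Fin m ⊕ Fin m) ℂ := fromBlocks A' 0 0 S' with hDm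
  have hLdet : IsUnit L.det := by
    rw [hL, det_fromBlocks_zero₁₂]; simp
  have hRdet : IsUnit R.det := by
    rw [hR, det_fromBlocks_zero₂₁]; simp
  have key : B' * P' * A' * (P' * B') = B' * P' * B' := by
    calc B' * P' * A' * (P' * B') = B' * (P' * A' * P') * B' := by
          simp only [Matrix.mul_assoc]
      _ = B' * P' * B' := by rw [c2]
  have hLDR : L * Dm * R = T := by
    rw [hL, hDm, hR, hT, fromBlocks_multiply, fromBlocks_multiply, fromBlocks_inj]
    refine ⟨?_, ?_, ?_, ?_⟩
    · simp
    · simp only [Matrix.one_mul, Matrix.zero_mul, Matrix.mul_zero, Matrix.mul_one, add_zero,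
        zero_add, Matrix.mul_neg]
      rw [← Matrix.mul_assoc, cAApB]
    · simp only [Matrix.one_mul, Matrix.zero_mul, Matrix.mul_zero, Matrix.mul_one, add_zero,
        zero_add]
      exact cBApA
    · simp only [Matrix.one_mul, Matrix.zero_mul, Matrix.mul_zero, Matrix.mul_one, add_zero,
        zero_add, Matrix.mul_neg]
      rw [key, hS']
      abel
  -- similarity factorization
  set Pm : Matrix (Fin m ⊕ Fin m) (Fin m ⊕ Fin m) ℂ :=
    fromBlocks 1 1 (Complex.I • 1) (-(Complex.I • 1)) with hPm
  set Qm : Matrix (Fin m ⊕ Fin m) (Fin m ⊕ Fin m) ℂ :=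
    fromBlocks ((2⁻¹ : ℂ) • 1) ((-(2⁻¹ * Complex.I)) • 1)
      ((2⁻¹ : ℂ) • 1) ((2⁻¹ * Complex.I) • 1) with hQm
  set D2 : Matrix (Fin m ⊕ Fin m) (Fin m ⊕ Fin m) ℂ := fromBlocks Mc 0 0 Nc with hD2
  have hPQ : Pm * Qm = 1 := by
    rw [hPm, hQm, fromBlocks_multiply, ← fromBlocks_one, fromBlocks_inj]
    refine ⟨?_, ?_, ?_, ?_⟩
    · simp only [Matrix.one_mul, Matrix.mul_smul, Matrix.smul_mul, smul_smul]
      match_scalars <;>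
        first
          | ring1
          | linear_combination (2⁻¹:ℂ) * Complex.I_sq
          | linear_combination (-(2⁻¹:ℂ)) * Complex.I_sq
          | linear_combination Complex.I_sq
          | linear_combination -Complex.I_sq
    · simp only [Matrix.one_mul, Matrix.mul_smul, Matrix.smul_mul, smul_smul]
      match_scalars <;>
        first
          | ring1
          | linear_combination (2⁻¹:ℂ) * Complex.I_sq
          | linear_combination (-(2⁻¹:ℂ)) * Complex.I_sq
          | linear_combination Complex.I_sq
          | linear_combination -Complex.I_sq
    · simp only [Matrix.one_mul, Matrix.mul_smul, Matrix.smul_mul, smul_smul,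
        Matrix.neg_mul, Matrix.mul_neg, neg_smul]
      match_scalars <;>
        first
          | ring1
          | linear_combination (2⁻¹:ℂ) * Complex.I_sq
          | linear_combination (-(2⁻¹:ℂ)) * Complex.I_sq
          | linear_combination Complex.I_sq
          | linear_combination -Complex.I_sq
    · simp only [Matrix.one_mul, Matrix.mul_smul, Matrix.smul_mul, smul_smul,
        Matrix.neg_mul, Matrix.mul_neg, neg_smul, neg_neg]
      match_scalars <;>
        first
          | ring1
          | linear_combination (2⁻¹:ℂ) * Complex.I_sq
          | linear_combination (-(2⁻¹:ℂ)) * Complex.I_sq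
          | linear_combination Complex.I_sq
          | linear_combination -Complex.I_sq
  have hPdet : IsUnit Pm.det := Matrix.isUnit_det_of_right_inverse hPQ
  have hQdet : IsUnit Qm.det := Matrix.isUnit_det_of_left_inverse hPQ
  have hPDQ : Pm * D2 * Qm = T := by
    rw [hPm, hD2, hQm, hT, fromBlocks_multiply, fromBlocks_multiply, fromBlocks_inj]
    refine ⟨?_, ?_, ?_, ?_⟩
    · simp only [Matrix.one_mul, Matrix.mul_smul, Matrix.smul_mul, Matrix.mul_zero,
        Matrix.zero_mul, Matrix.mul_one, add_zero, zero_add, smul_smul]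
      rw [hMc, hNc]
      match_scalars <;>
        first
          | ring1
          | linear_combination (2⁻¹:ℂ) * Complex.I_sq
          | linear_combination (-(2⁻¹:ℂ)) * Complex.I_sq
          | linear_combination Complex.I_sq
          | linear_combination -Complex.I_sq
    · simp only [Matrix.one_mul, Matrix.mul_smul, Matrix.smul_mul, Matrix.mul_zero,
        Matrix.zero_mul, Matrix.mul_one, add_zero, zero_add, smul_smul, neg_smul,
        Matrix.mul_neg, Matrix.neg_mul]
      rw [hMc, hNc]
      match_scalars <;>
        first
          | ring1
          | linear_combination (2⁻¹:ℂ) * Complex.I_sq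
          | linear_combination (-(2⁻¹:ℂ)) * Complex.I_sq
          | linear_combination Complex.I_sq
          | linear_combination -Complex.I_sq
    · simp only [Matrix.one_mul, Matrix.mul_smul, Matrix.smul_mul, Matrix.mul_zero,
        Matrix.zero_mul, Matrix.mul_one, add_zero, zero_add, smul_smul, neg_smul,
        Matrix.mul_neg, Matrix.neg_mul, neg_zero]
      rw [hMc, hNc]
      match_scalars <;>
        first
          | ring1
          | linear_combination (2⁻¹:ℂ) * Complex.I_sq
          | linear_combination (-(2⁻¹:ℂ)) * Complex.I_sq
          | linear_combination Complex.I_sq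
          | linear_combination -Complex.I_sq
    · simp only [Matrix.one_mul, Matrix.mul_smul, Matrix.smul_mul, Matrix.mul_zero,
        Matrix.zero_mul, Matrix.mul_one, add_zero, zero_add, smul_smul, neg_smul,
        Matrix.mul_neg, Matrix.neg_mul, neg_zero, neg_neg]
      rw [hMc, hNc]
      match_scalars <;>
        first
          | ring1
          | linear_combination (2⁻¹:ℂ) * Complex.I_sq
          | linear_combination (-(2⁻¹:ℂ)) * Complex.I_sq
          | linear_combination Complex.I_sq
          | linear_combination -Complex.I_sq
  -- Nc is the transpose of Mc
  have hNcMc : Nc = Mcᵀ := by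
    rw [hNc, hMc]
    ext i j
    have hsAij : A j i = A i j := by
      have := congrFun (congrFun hsym i) j; simpa using this
    have hsBij : B j i = -B i j := by
      have := congrFun (congrFun hB i) j; simpa using this
    simp only [Matrix.transpose_apply, Matrix.sub_apply, Matrix.add_apply, Matrix.smul_apply,
      Matrix.map_apply, hA', hB', smul_eq_mul]
    rw [hsAij, hsBij]
    push_cast
    ring
  -- rank computations
  have rank1 : T.rank = Dm.rank := by
    rw [← hLDR, rank_mul_eq_left_of_isUnit_det _ _ hRdet,
      rank_mul_eq_right_of_isUnit_det _ _ hLdet]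
  have rank2 : T.rank = D2.rank := by
    rw [← hPDQ, rank_mul_eq_left_of_isUnit_det _ _ hQdet,
      rank_mul_eq_right_of_isUnit_det _ _ hPdet]
  have rankDm : Dm.rank = A'.rank + S'.rank := by
    rw [hDm]; exact rank_fromBlocks_diag A' S'
  have rankD2 : D2.rank = Mc.rank + Nc.rank := by
    rw [hD2]; exact rank_fromBlocks_diag Mc Nc
  have rankNc : Nc.rank = Mc.rank := by rw [hNcMc, Matrix.rank_transpose]
  have final : 2 * Mc.rank = A'.rank + S'.rank := by
    omega
  rw [hTarget]
  exact final
end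

section
/- Let A be an m×m real symmetric positive semidefinite matrix and B an m×m real skew-symmetric matrix with A - iB positive semidefinite. Then rank(B) ≥ rank(A) - rank(A - B A^⊖ B^T), where A^⊖ is the Moore–Penrose pseudoinverse of A. -/
open Matrix Complex ComplexOrder

lemma my_rank_add_le {m : ℕ} (X Y : Matrix (Fin m) (Fin m) ℂ) :
    (X + Y).rank ≤ X.rank + Y.rank := by
  simp only [Matrix.rank]
  have hr : LinearMap.range (X + Y).mulVecLin ≤
      LinearMap.range X.mulVecLin ⊔ LinearMap.range Y.mulVecLin := by
    rintro _ ⟨v, rfl⟩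
    rw [Matrix.mulVecLin_add]
    exact Submodule.add_mem_sup ⟨v, rfl⟩ ⟨v, rfl⟩
  exact (Submodule.finrank_mono hr).trans
    (Submodule.finrank_add_le_finrank_add_finrank _ _)

/-- For `A` real symmetric PSD and `B` real skew-symmetric with `A - iB`
positive semidefinite, `rank B ≥ rank A - rank (A - B A⁻ Bᵀ)`, ranks over `ℂ`. -/
theorem rank_B_ge (m : ℕ) (A B Ap : Matrix (Fin m) (Fin m) ℝ)
    (hA : (A.map Complex.ofReal).PosSemidef)
    (hB : Bᵀ = -B)
    (h : ((A.map Complex.ofReal) - Complex.I • (B.map Complex.ofReal)).PosSemidef)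
    (hAp : IsMoorePenroseInv A Ap) :
    ((A.map Complex.ofReal).rank : ℤ) - (((A - B * Ap * Bᵀ).map Complex.ofReal).rank : ℤ) ≤
      ((B.map Complex.ofReal).rank : ℤ) := by
  have hdecomp : A.map Complex.ofReal =
      (A - B * Ap * Bᵀ).map Complex.ofReal + (B * Ap * Bᵀ).map Complex.ofReal := by
    rw [← Matrix.map_add _ (by push_cast; intros; ring)]
    congr 1
    simp [sub_eq_add_neg]
  have h1 : (A.map Complex.ofReal).rank ≤
      ((A - B * Ap * Bᵀ).map Complex.ofReal).rank + ((B * Ap * Bᵀ).map Complex.ofReal).rank := by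
    rw [hdecomp]; exact my_rank_add_le _ _
  have h2 : ((B * Ap * Bᵀ).map Complex.ofReal).rank ≤ (B.map Complex.ofReal).rank := by
    have : (B * Ap * Bᵀ).map Complex.ofReal =
        (B.map Complex.ofReal) * ((Ap * Bᵀ).map Complex.ofReal) := by
      ext i j
      simp [Matrix.mul_apply, Matrix.map_apply, Finset.sum_mul, Finset.mul_sum]
      push_cast
      simp_rw [mul_assoc]
      rw [Finset.sum_comm]
    rw [this]
    exact Matrix.rank_mul_le_left _ _
  omega
end

section
/- Let A be an m×m real symmetric positive semidefinite matrix and B an m×m real skew-symmetric matrix with A - iB positive semidefinite. Then rank(A) ≥ rank(B). -/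
open Matrix Complex ComplexOrder

namespace Matrix

variable {m n : Type*}

theorem rank_le_rank_of_ker_mulVecLin_le [Fintype n] {K : Type*} [Field K] {M N : Matrix m n K}
    (h : LinearMap.ker M.mulVecLin ≤ LinearMap.ker N.mulVecLin) : N.rank ≤ M.rank := by
  have hM := LinearMap.finrank_range_add_finrank_ker M.mulVecLin
  have hN := LinearMap.finrank_range_add_finrank_ker N.mulVecLin
  have hker := Submodule.finrank_mono h
  unfold rank
  omega

namespace PosSemidef

variable {𝕜 : Type*} [RCLike 𝕜]

theorem map_star {M : Matrix n n 𝕜} (hM : M.PosSemidef) : (M.map star).PosSemidef :=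
  hM.transpose.conjTranspose

theorem mulVec_eq_zero_of_add_mulVec_eq_zero_s6 [Fintype n] {P Q : Matrix n n 𝕜} (hP : P.PosSemidef)
    (hQ : Q.PosSemidef) {x : n → 𝕜} (hx : (P + Q) *ᵥ x = 0) : P *ᵥ x = 0 := by
  have hsum : star x ⬝ᵥ P *ᵥ x + star x ⬝ᵥ Q *ᵥ x = 0 := by
    rw [← dotProduct_add, ← add_mulVec, hx, dotProduct_zero]
  have hPx := (add_eq_zero_iff_of_nonneg (hP.dotProduct_mulVec_nonneg x)
    (hQ.dotProduct_mulVec_nonneg x)).mp hsum |>.1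
  exact (hP.dotProduct_mulVec_zero_iff x).mp hPx

end PosSemidef

/-- `A - iB` and its entrywise conjugate `A + iB` are both positive semidefinite, and they add up
to `2A`; so a vector killed by `A` is killed by `A - iB`, hence by `B`. -/
theorem ker_mulVecLin_le_of_posSemidef_sub_I_smul [Fintype n] {A B : Matrix n n ℝ}
    (h : (A.map ofReal - I • B.map ofReal).PosSemidef) :
    LinearMap.ker (A.map ofReal).mulVecLin ≤ LinearMap.ker (B.map ofReal).mulVecLin := by
  intro x hAx
  replace hAx : A.map ofReal *ᵥ x = 0 := hAx
  have hsum : (A.map ofReal - I • B.map ofReal) + (A.map ofReal - I • B.map ofReal).map star =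
      (2 : ℂ) • A.map ofReal := by
    ext i j
    simp only [add_apply, sub_apply, smul_apply, map_apply, smul_eq_mul, Complex.star_def,
      map_sub, map_mul, conj_I, conj_ofReal]
    ring
  have hMx := h.mulVec_eq_zero_of_add_mulVec_eq_zero_s6 h.map_star
    (by rw [hsum, smul_mulVec, hAx, smul_zero])
  rw [sub_mulVec, hAx, zero_sub, neg_eq_zero, smul_mulVec, smul_eq_zero] at hMx
  exact hMx.resolve_left I_ne_zero

end Matrix

theorem rank_A_ge_rank_B_general (m : ℕ) (A B : Matrix (Fin m) (Fin m) ℝ)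
    (h : ((A.map Complex.ofReal) - Complex.I • (B.map Complex.ofReal)).PosSemidef) :
    (B.map Complex.ofReal).rank ≤ (A.map Complex.ofReal).rank :=
  rank_le_rank_of_ker_mulVecLin_le (ker_mulVecLin_le_of_posSemidef_sub_I_smul h)

/-- For `A` real symmetric PSD and `B` real skew-symmetric with `A - iB`
positive semidefinite, `rank A ≥ rank B` (ranks over `ℂ`). -/
theorem rank_A_ge_rank_B (m : ℕ) (A B : Matrix (Fin m) (Fin m) ℝ)
    (hA : (A.map Complex.ofReal).PosSemidef)
    (hB : Bᵀ = -B)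
    (h : ((A.map Complex.ofReal) - Complex.I • (B.map Complex.ofReal)).PosSemidef) :
    (B.map Complex.ofReal).rank ≤ (A.map Complex.ofReal).rank :=
  rank_A_ge_rank_B_general m A B h
end

section
/- Let A be an m×m real symmetric positive semidefinite matrix and B an m×m real skew-symmetric matrix with A - iB positive semidefinite. Then rank(A) ≥ rank(A - B A^⊖ B^T), equivalently the matrix B A^⊖ B^T is positive semidefinite and its subtraction cannot increase the rank beyond rank(A); in particular rank(A) - rank(A - B A^⊖ B^T) ≥ 0. -/
open Matrix Complex ComplexOrder

/-- For `A` real symmetric PSD and `B` real skew-symmetric with `A - iB`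
positive semidefinite, the matrix `B A⁻ Bᵀ` is positive semidefinite and
`rank(A - B A⁻ Bᵀ) ≤ rank A`; in particular `rank A - rank(A - B A⁻ Bᵀ) ≥ 0`. -/
theorem rank_A_ge_rank_schur (m : ℕ) (A B Ap : Matrix (Fin m) (Fin m) ℝ)
    (hA : (A.map Complex.ofReal).PosSemidef)
    (hB : Bᵀ = -B)
    (h : ((A.map Complex.ofReal) - Complex.I • (B.map Complex.ofReal)).PosSemidef)
    (hAp : IsMoorePenroseInv A Ap) :
    ((B * Ap * Bᵀ).map Complex.ofReal).PosSemidef ∧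
      ((A - B * Ap * Bᵀ).map Complex.ofReal).rank ≤ (A.map Complex.ofReal).rank ∧
      (0 : ℤ) ≤ ((A.map Complex.ofReal).rank : ℤ) -
        (((A - B * Ap * Bᵀ).map Complex.ofReal).rank : ℤ) := by
  obtain ⟨p1, p2, p3, p4⟩ := hAp
  -- `A` is symmetric
  have hAsym : Aᵀ = A := by
    ext i j
    have h1 := congrFun (congrFun hA.isHermitian i) j
    simp only [conjTranspose_apply, map_apply, Complex.star_def, Complex.conj_ofReal] at h1
    exact_mod_cast h1
  -- kernel of `A` is contained in kernel of `B`
  have hker : ∀ x : Fin m → ℝ, A *ᵥ x = 0 → B *ᵥ x = 0 := by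
    intro x hx
    set x' : Fin m → ℂ := fun i => (x i : ℂ) with hx'def
    have hstar : star x' = x' := by
      funext i; simp [hx'def]
    have hA'x : (A.map Complex.ofReal) *ᵥ x' = 0 := by
      funext i
      have h0 : ((A.map Complex.ofReal) *ᵥ x') i = ((A *ᵥ x) i : ℂ) :=
        (RingHom.map_mulVec Complex.ofRealHom A x i).symm
      rw [hx] at h0
      simpa using h0
    have hB'x : (B.map Complex.ofReal) *ᵥ x' = fun i => ((B *ᵥ x) i : ℂ) := by
      funext i
      exact (RingHom.map_mulVec Complex.ofRealHom B x i).symm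
    have hskew : x ⬝ᵥ (B *ᵥ x) = 0 := by
      have h1 : x ⬝ᵥ (Bᵀ *ᵥ x) = x ⬝ᵥ ((-B) *ᵥ x) := by rw [hB]
      rw [Matrix.mulVec_transpose, Matrix.neg_mulVec, dotProduct_neg,
        dotProduct_comm, ← Matrix.dotProduct_mulVec] at h1
      linarith
    have hq : star x' ⬝ᵥ ((A.map Complex.ofReal - Complex.I • B.map Complex.ofReal) *ᵥ x') = 0 := by
      rw [hstar, Matrix.sub_mulVec, dotProduct_sub, hA'x,
        Matrix.smul_mulVec, hB'x, dotProduct_zero, dotProduct_smul]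
      have h2 : x' ⬝ᵥ (fun i => ((B *ᵥ x) i : ℂ)) = ((x ⬝ᵥ (B *ᵥ x) : ℝ) : ℂ) := by
        simp only [dotProduct, hx'def]
        push_cast
        rfl
      rw [h2, hskew]
      simp
    have hMx := (h.dotProduct_mulVec_zero_iff x').mp hq
    rw [Matrix.sub_mulVec, hA'x, Matrix.smul_mulVec, zero_sub, neg_eq_zero,
      smul_eq_zero] at hMx
    rcases hMx with hI | hz
    · exact absurd hI Complex.I_ne_zero
    · funext i
      have := congrFun hz i
      rw [hB'x] at this
      simpa using this
  -- matrix form of the kernel inclusion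
  have hmul : ∀ M : Matrix (Fin m) (Fin m) ℝ, A * M = 0 → B * M = 0 := by
    intro M hM
    ext i j
    have hcol : A *ᵥ (fun k => M k j) = 0 := by
      funext i'
      have := congrFun (congrFun hM i') j
      simpa [Matrix.mul_apply, Matrix.mulVec, dotProduct] using this
    have := congrFun (hker _ hcol) i
    simpa [Matrix.mul_apply, Matrix.mulVec, dotProduct] using this
  -- algebraic identities
  have hAAAp : A * A * Ap = A :=
    calc A * A * Ap = A * (A * Ap) := Matrix.mul_assoc A A Ap
    _ = Aᵀ * (A * Ap)ᵀ := by rw [hAsym, p3]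
    _ = ((A * Ap) * A)ᵀ := (Matrix.transpose_mul (A * Ap) A).symm
    _ = Aᵀ := by rw [p1]
    _ = A := hAsym
  have hBApA : B * Ap * A = B := by
    have hz : A * (Ap * A - 1) = 0 := by
      rw [Matrix.mul_sub, mul_one, ← Matrix.mul_assoc, p1, sub_self]
    have h0 := hmul _ hz
    rw [Matrix.mul_sub, mul_one, sub_eq_zero, ← Matrix.mul_assoc] at h0
    exact h0
  have hBAAp : B * A * Ap = B := by
    have hz : A * (A * Ap - 1) = 0 := by
      rw [Matrix.mul_sub, mul_one, ← Matrix.mul_assoc, hAAAp, sub_self]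
    have h0 := hmul _ hz
    rw [Matrix.mul_sub, mul_one, sub_eq_zero, ← Matrix.mul_assoc] at h0
    exact h0
  have hAApBt : A * Ap * Bᵀ = Bᵀ := by
    have h0 : (B * (A * Ap))ᵀ = (A * Ap)ᵀ * Bᵀ := Matrix.transpose_mul _ _
    rw [p3, ← Matrix.mul_assoc, hBAAp] at h0
    exact h0.symm
  have hAApB : A * Ap * B = B := by
    have h0 := hAApBt
    rw [hB, Matrix.mul_neg, neg_eq_iff_eq_neg, neg_neg] at h0
    exact h0
  have hAptA : Apᵀ * A = A * Ap :=
    calc Apᵀ * A = Apᵀ * Aᵀ := by rw [hAsym]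
    _ = (A * Ap)ᵀ := (Matrix.transpose_mul A Ap).symm
    _ = A * Ap := p3
  -- the key factorizations
  have hkey : (Ap * Bᵀ)ᵀ * A * (Ap * Bᵀ) = B * Ap * Bᵀ := by
    rw [Matrix.transpose_mul, Matrix.transpose_transpose, ← Matrix.mul_assoc,
      Matrix.mul_assoc B Apᵀ A, hAptA, ← Matrix.mul_assoc, hBAAp]
  have hsub : A - B * Ap * Bᵀ = A * (1 - Ap * (B * Ap * Bᵀ)) := by
    rw [Matrix.mul_sub, mul_one, ← Matrix.mul_assoc, ← Matrix.mul_assoc, ← Matrix.mul_assoc,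
      hAApB]
  -- helper facts about `map ofReal`
  have mmul : ∀ X Y : Matrix (Fin m) (Fin m) ℝ,
      (X * Y).map Complex.ofReal = X.map Complex.ofReal * Y.map Complex.ofReal := fun X Y =>
    Matrix.map_mul (f := Complex.ofRealHom)
  have mct : ∀ X : Matrix (Fin m) (Fin m) ℝ,
      (Xᵀ).map Complex.ofReal = (X.map Complex.ofReal)ᴴ := by
    intro X
    ext i j
    simp [Matrix.conjTranspose_apply, Complex.conj_ofReal]
  -- PSD part
  have hPSD : ((B * Ap * Bᵀ).map Complex.ofReal).PosSemidef := by
    rw [← hkey, mmul, mmul, mct]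
    exact hA.conjTranspose_mul_mul_same ((Ap * Bᵀ).map Complex.ofReal)
  -- rank part
  have hrank : ((A - B * Ap * Bᵀ).map Complex.ofReal).rank ≤ (A.map Complex.ofReal).rank := by
    rw [hsub, mmul]
    exact Matrix.rank_mul_le_left _ _
  exact ⟨hPSD, hrank, sub_nonneg.mpr (by exact_mod_cast hrank)⟩
end

section
/- Let D be an n×n real diagonal matrix with diagonal entries D_j ≥ 1, interpreted as defining a 2n×2n covariance matrix γ = diag(D, D) (in q,p block form) satisfying γ ≥ iσ_{2n} with σ_{2n} = [[0, I_n],[-I_n, 0]]. Define η = diag(-√(D_1²-1), ..., -√(D_n²-1)) and the 4n×4n matrix Γ = [[diag(D,D), C],[C^T, diag(D,D)]] with C = [[0, η],[η, 0]]. Then Γ ≥ iσ_{4n} (with σ_{4n} = σ_{2n} ⊕ σ_{2n}) and all symplectic eigenvalues of Γ equal 1, i.e., Γ is the covariance matrix of a pure Gaussian state purifying γ. -/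
open Matrix Complex ComplexOrder

/-- The standard symplectic form `[[0, I_n], [-I_n, 0]]` on `n` modes. -/
def sympForm (n : ℕ) : Matrix (Fin n ⊕ Fin n) (Fin n ⊕ Fin n) ℝ :=
  Matrix.fromBlocks 0 1 (-1) 0

namespace PurifyAux

variable {n : ℕ}

/-- abbreviation for the doubled index type -/
local notation "Idx" n => (Fin n ⊕ Fin n) ⊕ (Fin n ⊕ Fin n)

noncomputable def Smat (a b : Fin n → ℝ) : Matrix (Idx n) (Idx n) ℝ :=
  Matrix.fromBlocks
    (Matrix.fromBlocks (Matrix.diagonal a) 0 0 (Matrix.diagonal a))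
    (Matrix.fromBlocks 0 (Matrix.diagonal b) (Matrix.diagonal b) 0)
    (Matrix.fromBlocks 0 (Matrix.diagonal b) (Matrix.diagonal b) 0)
    (Matrix.fromBlocks (Matrix.diagonal a) 0 0 (Matrix.diagonal a))

def sig4 (n : ℕ) : Matrix (Idx n) (Idx n) ℝ :=
  Matrix.fromBlocks (sympForm n) 0 0 (sympForm n)

noncomputable def Gam (D η : Fin n → ℝ) : Matrix (Idx n) (Idx n) ℝ :=
  Matrix.fromBlocks
    (Matrix.fromBlocks (Matrix.diagonal D) 0 0 (Matrix.diagonal D))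
    (Matrix.fromBlocks 0 (Matrix.diagonal η) (Matrix.diagonal η) 0)
    (Matrix.fromBlocks 0 (Matrix.diagonal η) (Matrix.diagonal η) 0)ᵀ
    (Matrix.fromBlocks (Matrix.diagonal D) 0 0 (Matrix.diagonal D))

lemma k1 (a b : Fin n → ℝ) (h : ∀ j, a j ^ 2 - b j ^ 2 = 1) :
    Smat a b * sig4 n * (Smat a b)ᵀ = sig4 n := by
  simp only [Smat, sig4, sympForm, Matrix.fromBlocks_multiply, Matrix.fromBlocks_transpose,
    Matrix.diagonal_transpose, Matrix.diagonal_mul_diagonal, Matrix.mul_one, Matrix.one_mul,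
    Matrix.mul_zero, Matrix.zero_mul, Matrix.mul_neg, Matrix.neg_mul, add_zero, zero_add,
    Matrix.fromBlocks_neg, neg_neg, neg_zero, Matrix.diagonal_neg,
    Matrix.transpose_zero, Matrix.transpose_one]
  ext i j
  rcases i with (i|i)|(i|i) <;> rcases j with (j|j)|(j|j) <;>
    by_cases hij : i = j <;>
    simp [Matrix.fromBlocks, Matrix.one_apply, Matrix.diagonal_apply, hij] <;>
    nlinarith [h j]

lemma k2 (a b D η : Fin n → ℝ) (h1 : ∀ j, a j ^ 2 + b j ^ 2 = D j)
    (h2 : ∀ j, 2 * (a j * b j) = η j) :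
    Smat a b * (Smat a b)ᵀ = Gam D η := by
  simp only [Smat, Gam, Matrix.fromBlocks_multiply, Matrix.fromBlocks_transpose,
    Matrix.diagonal_transpose, Matrix.diagonal_mul_diagonal, Matrix.mul_one, Matrix.one_mul,
    Matrix.mul_zero, Matrix.zero_mul, Matrix.mul_neg, Matrix.neg_mul, add_zero, zero_add,
    Matrix.fromBlocks_neg, neg_neg, neg_zero, Matrix.diagonal_neg,
    Matrix.transpose_zero, Matrix.transpose_one]
  ext i j
  rcases i with (i|i)|(i|i) <;> rcases j with (j|j)|(j|j) <;>
    by_cases hij : i = j <;>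
    simp [Matrix.fromBlocks, Matrix.one_apply, Matrix.diagonal_apply, hij] <;>
    nlinarith [h1 j, h2 j]

lemma k3 (D η : Fin n → ℝ) (h : ∀ j, D j ^ 2 - η j ^ 2 = 1) :
    -(sig4 n * Gam D η * sig4 n * Gam D η) = 1 := by
  simp only [Gam, sig4, sympForm, Matrix.fromBlocks_multiply, Matrix.fromBlocks_transpose,
    Matrix.diagonal_transpose, Matrix.diagonal_mul_diagonal, Matrix.mul_one, Matrix.one_mul,
    Matrix.mul_zero, Matrix.zero_mul, Matrix.mul_neg, Matrix.neg_mul, add_zero, zero_add,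
    Matrix.fromBlocks_neg, neg_neg, neg_zero, Matrix.diagonal_neg,
    Matrix.transpose_zero, Matrix.transpose_one]
  ext i j
  rcases i with (i|i)|(i|i) <;> rcases j with (j|j)|(j|j) <;>
    by_cases hij : i = j <;>
    simp [Matrix.fromBlocks, Matrix.one_apply, Matrix.diagonal_apply, hij] <;>
    nlinarith [h j]

lemma k4 : sig4 n * sig4 n = -1 := by
  simp only [sig4, sympForm, Matrix.fromBlocks_multiply, Matrix.mul_one, Matrix.one_mul,
    Matrix.mul_zero, Matrix.zero_mul, Matrix.mul_neg, Matrix.neg_mul, add_zero, zero_add,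
    Matrix.fromBlocks_neg, neg_neg, neg_zero, Matrix.transpose_zero, Matrix.transpose_one]
  ext i j
  rcases i with (i|i)|(i|i) <;> rcases j with (j|j)|(j|j) <;>
    simp [Matrix.fromBlocks, Matrix.one_apply]

lemma k5 : (sig4 n)ᵀ = -(sig4 n) := by
  simp only [sig4, sympForm, Matrix.fromBlocks_transpose, Matrix.fromBlocks_neg,
    Matrix.transpose_zero, Matrix.transpose_one, Matrix.transpose_neg, neg_neg, neg_zero]

lemma map_mul' {l m o : Type*} [Fintype m] (A : Matrix l m ℝ) (B : Matrix m o ℝ) :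
    (A * B).map Complex.ofReal = A.map Complex.ofReal * B.map Complex.ofReal :=
  Matrix.map_mul (f := Complex.ofRealHom)

lemma map_transpose' {l m : Type*} (A : Matrix l m ℝ) :
    Aᵀ.map Complex.ofReal = (A.map Complex.ofReal)ᴴ := by
  ext i j
  simp [Matrix.conjTranspose_apply, Complex.conj_ofReal]

lemma map_one' {m : Type*} [DecidableEq m] :
    (1 : Matrix m m ℝ).map Complex.ofReal = 1 :=
  Matrix.map_one _ Complex.ofReal_zero Complex.ofReal_one

lemma map_neg' {l m : Type*} (A : Matrix l m ℝ) :
    (-A).map Complex.ofReal = -(A.map Complex.ofReal) := by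
  ext i j; simp

lemma mem_spectrum_one {A : Type*} [Ring A] [Algebra ℂ A] {μ : ℂ}
    (h : μ ∈ spectrum ℂ (1 : A)) : μ = 1 := by
  by_contra hne
  rw [spectrum.mem_iff, ← map_one (algebraMap ℂ A), ← map_sub] at h
  exact h ((isUnit_iff_ne_zero.2 (sub_ne_zero.2 hne)).map (algebraMap ℂ A))

end PurifyAux

open PurifyAux

/-- For `D` diagonal with entries `D j ≥ 1`, let `γ = diag(D, D)` (a covariance
matrix with `γ ≥ iσ_{2n}`), `η = diag(-√(D_j² - 1))`, `C = [[0, η], [η, 0]]`, and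
`Γ = [[γ, C], [Cᵀ, γ]]`.  Then `Γ ≥ iσ_{4n}` (with `σ_{4n} = σ_{2n} ⊕ σ_{2n}`) and all
symplectic eigenvalues of `Γ` equal `1`, i.e. every eigenvalue of `-σ_{4n} Γ σ_{4n} Γ`
equals `1`: `Γ` is the covariance matrix of a pure Gaussian state purifying `γ`. -/
theorem purification_covariance_is_pure (n : ℕ) (D : Fin n → ℝ) (hD : ∀ j, 1 ≤ D j) :
    let γ : Matrix (Fin n ⊕ Fin n) (Fin n ⊕ Fin n) ℝ :=
      Matrix.fromBlocks (Matrix.diagonal D) 0 0 (Matrix.diagonal D)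
    let η : Fin n → ℝ := fun j => -Real.sqrt ((D j) ^ 2 - 1)
    let C : Matrix (Fin n ⊕ Fin n) (Fin n ⊕ Fin n) ℝ :=
      Matrix.fromBlocks 0 (Matrix.diagonal η) (Matrix.diagonal η) 0
    let Γ : Matrix ((Fin n ⊕ Fin n) ⊕ (Fin n ⊕ Fin n)) ((Fin n ⊕ Fin n) ⊕ (Fin n ⊕ Fin n)) ℝ :=
      Matrix.fromBlocks γ C Cᵀ γ
    let σ4 : Matrix ((Fin n ⊕ Fin n) ⊕ (Fin n ⊕ Fin n)) ((Fin n ⊕ Fin n) ⊕ (Fin n ⊕ Fin n)) ℝ :=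
      Matrix.fromBlocks (sympForm n) 0 0 (sympForm n)
    ((Γ.map Complex.ofReal) - Complex.I • (σ4.map Complex.ofReal)).PosSemidef ∧
      ∀ μ ∈ spectrum ℂ ((-(σ4 * Γ * σ4 * Γ)).map Complex.ofReal), μ = 1 := by
  intro γ η C Γ σ4
  -- identify the let-bound matrices with the auxiliary definitions
  have hΓ : Γ = Gam D η := rfl
  have hσ : σ4 = sig4 n := rfl
  -- scalar facts
  set a : Fin n → ℝ := fun j => Real.sqrt ((D j + 1) / 2) with ha
  set b : Fin n → ℝ := fun j => -Real.sqrt ((D j - 1) / 2) with hb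
  have ha2 : ∀ j, a j ^ 2 = (D j + 1) / 2 := fun j =>
    Real.sq_sqrt (by linarith [hD j])
  have hb2 : ∀ j, b j ^ 2 = (D j - 1) / 2 := fun j => by
    have hx : b j ^ 2 = Real.sqrt ((D j - 1) / 2) ^ 2 := by rw [hb]; ring
    rw [hx, Real.sq_sqrt (by linarith [hD j] : (0:ℝ) ≤ (D j - 1)/2)]
  have hab1 : ∀ j, a j ^ 2 - b j ^ 2 = 1 := fun j => by rw [ha2, hb2]; ring
  have hab2 : ∀ j, a j ^ 2 + b j ^ 2 = D j := fun j => by rw [ha2, hb2]; ring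
  have hab3 : ∀ j, 2 * (a j * b j) = η j := by
    intro j
    have h1 : (0:ℝ) ≤ (D j + 1) / 2 := by linarith [hD j]
    have h2 : (0:ℝ) ≤ (D j - 1) / 2 := by linarith [hD j]
    have : a j * b j = -Real.sqrt (((D j + 1) / 2) * ((D j - 1) / 2)) := by
      rw [ha, hb, mul_neg, Real.sqrt_mul h1]
    rw [this]
    have : ((D j + 1) / 2) * ((D j - 1) / 2) = (D j ^ 2 - 1) / 4 := by ring
    rw [this]
    show 2 * -Real.sqrt ((D j ^ 2 - 1) / 4) = -Real.sqrt (D j ^ 2 - 1)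
    have h3 : (0:ℝ) ≤ D j ^ 2 - 1 := by nlinarith [hD j]
    rw [show (D j ^ 2 - 1) / 4 = (D j ^ 2 - 1) * (1/2)^2 by ring,
      Real.sqrt_mul h3, Real.sqrt_sq (by norm_num : (0:ℝ) ≤ 1/2)]
    ring
  have hDη : ∀ j, D j ^ 2 - η j ^ 2 = 1 := by
    intro j
    have h3 : (0:ℝ) ≤ D j ^ 2 - 1 := by nlinarith [hD j]
    show D j ^ 2 - (-Real.sqrt (D j ^ 2 - 1)) ^ 2 = 1
    rw [neg_pow]; simp [Real.sq_sqrt h3]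
  constructor
  · -- positive semidefiniteness
    rw [hΓ, hσ]
    set Sc : Matrix _ _ ℂ := (Smat a b).map Complex.ofReal with hSc
    set σc : Matrix _ _ ℂ := (sig4 n).map Complex.ofReal with hσc
    set N : Matrix _ _ ℂ := 1 - Complex.I • σc with hN
    have hσcH : σcᴴ = -σc := by
      rw [hσc, ← map_transpose', k5, map_neg']
    have hσσ : σc * σc = -1 := by
      rw [hσc, ← map_mul', k4, map_neg', map_one']
    have hNherm : Nᴴ = N := by
      rw [hN, Matrix.conjTranspose_sub, Matrix.conjTranspose_smul, Matrix.conjTranspose_one,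
        hσcH, Complex.star_def, Complex.conj_I, neg_smul, smul_neg, neg_neg]
    have hx : (Complex.I • σc) * (Complex.I • σc) = 1 := by
      rw [Matrix.smul_mul, Matrix.mul_smul, smul_smul, Complex.I_mul_I, hσσ]
      simp
    have hNN : N * N = (2:ℂ) • N := by
      rw [hN, sub_mul, mul_sub, mul_sub, hx]
      simp only [one_mul, mul_one]
      module
    set c : ℂ := (Complex.ofReal (Real.sqrt 2))⁻¹ with hc
    set Q : Matrix _ _ ℂ := c • N with hQ
    have hcc : c * c = (2:ℂ)⁻¹ := by
      rw [hc, ← mul_inv, ← Complex.ofReal_mul,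
        Real.mul_self_sqrt (by norm_num : (0:ℝ) ≤ 2)]
      norm_num
    have hstarc : star c = c := by
      rw [hc, star_inv₀, Complex.star_def, Complex.conj_ofReal]
    have hQQ : Qᴴ * Q = N := by
      rw [hQ, Matrix.conjTranspose_smul, hstarc, hNherm, Matrix.smul_mul, Matrix.mul_smul,
        smul_smul, hcc, hNN, smul_smul]
      norm_num
    have hNpsd : N.PosSemidef := hQQ ▸ Matrix.posSemidef_conjTranspose_mul_self Q
    have e1 : Sc * σc * Scᴴ = σc := by
      rw [hSc, hσc, ← map_transpose', ← map_mul', ← map_mul', k1 a b hab1]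
    have e2 : Sc * Scᴴ = (Gam D η).map Complex.ofReal := by
      rw [hSc, ← map_transpose', ← map_mul', k2 a b D η hab2 hab3]
    have key : (Gam D η).map Complex.ofReal - Complex.I • σc = Sc * N * Scᴴ := by
      rw [hN, mul_sub, mul_one, sub_mul, Matrix.mul_smul, Matrix.smul_mul, e1, e2]
    rw [key]
    exact hNpsd.mul_mul_conjTranspose_same Sc
  · -- spectrum
    intro μ hμ
    rw [hΓ, hσ, k3 D η hDη, map_one'] at hμ
    exact mem_spectrum_one hμ
end

section
/- Let γ be a 2n×2n real symmetric matrix with γ ≥ iσ_{2n}. Then rank(γ - iσ_{2n}) = 2n - #₁(D), where D is the list of symplectic eigenvalues of γ and #₁(D) is the number of them equal to 1. Equivalently, dim ker(γ - iσ_{2n}) equals the number of unit symplectic eigenvalues of γ. -/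
open Matrix Complex ComplexOrder

/-! Congruence by the complexification of the symplectic matrix `S` preserves rank and turns
`γ - iσ` into `[[D, -i], [i, D]]`. The columns of `[[1, 1], [i, -i]]` are eigenvectors of the
latter with eigenvalues `D_j + 1` and `D_j - 1`, so its rank is `n` plus the number of
`D_j ≠ 1`. -/

namespace Matrix

variable {m R : Type*} [Fintype m]

theorem map_ofReal_mul_sub_I_smul_mul_transpose (P X Y : Matrix m m ℝ) :
    P.map ofReal * (X.map ofReal - I • Y.map ofReal) * (P.map ofReal)ᵀ =
      (P * X * Pᵀ).map ofReal - I • (P * Y * Pᵀ).map ofReal := by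
  have hmap (A B : Matrix m m ℝ) : (A * B).map ofReal = A.map ofReal * B.map ofReal :=
    Matrix.map_mul (f := ofRealHom)
  simp only [hmap, transpose_map, mul_sub, sub_mul, Matrix.mul_smul, Matrix.smul_mul]

variable [DecidableEq m]

theorem isUnit_det_of_mul_mul_transpose_eq [CommRing R] {S J : Matrix m m R}
    (hJ : IsUnit J.det) (hS : S * J * Sᵀ = J) : IsUnit S.det := by
  have hdet : S.det * S.det * J.det = J.det := by
    simpa only [det_mul, det_transpose, mul_right_comm] using congrArg det hS
  exact IsUnit.of_mul_eq_one _ (hJ.mul_eq_right.mp hdet)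

theorem rank_mul_mul_transpose_of_isUnit_det [CommRing R] (P A : Matrix m m R)
    (hP : IsUnit P.det) : (P * A * Pᵀ).rank = A.rank := by
  rw [rank_mul_eq_left_of_isUnit_det _ _ (by rwa [det_transpose]),
    rank_mul_eq_right_of_isUnit_det _ _ hP]

theorem fromBlocks_diagonal_I_mul (d : m → ℂ) :
    fromBlocks (diagonal d) (-(I • 1)) (I • 1) (diagonal d) *
        fromBlocks 1 1 (I • 1) (-(I • 1)) =
      fromBlocks 1 1 (I • 1) (-(I • 1)) * diagonal (Sum.elim (d + 1) (d - 1)) := by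
  rw [← fromBlocks_diagonal, fromBlocks_multiply, fromBlocks_multiply, Pi.add_def, Pi.sub_def,
    ← diagonal_add, ← diagonal_sub]
  simp only [Matrix.mul_one, Matrix.one_mul, Matrix.mul_zero,
    Matrix.smul_mul, Matrix.mul_smul, smul_smul, I_mul_I, Matrix.neg_mul, Matrix.mul_neg,
    neg_smul, smul_neg, neg_neg, one_smul, add_zero, zero_add]
  congr 1 <;> module

theorem isUnit_det_fromBlocks_one_one_I :
    IsUnit (fromBlocks (1 : Matrix m m ℂ) (1 : Matrix m m ℂ) (I • 1) (-(I • 1))).det := by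
  rw [det_fromBlocks_one₁₁, Matrix.mul_one, ← neg_add', ← two_smul ℂ, smul_smul,
    ← neg_smul, det_smul, det_one, mul_one]
  exact Ne.isUnit (by simp [I_ne_zero])

theorem rank_fromBlocks_diagonal_I (d : m → ℂ) :
    (fromBlocks (diagonal d) (-(I • 1)) (I • 1) (diagonal d)).rank =
      Nat.card {i // d i + 1 ≠ 0} + Nat.card {i // d i - 1 ≠ 0} := by
  classical
  have hT := isUnit_det_fromBlocks_one_one_I (m := m)
  rw [← rank_mul_eq_left_of_isUnit_det _ _ hT, fromBlocks_diagonal_I_mul,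
    rank_mul_eq_right_of_isUnit_det _ _ hT, rank_diagonal, Nat.card_eq_fintype_card,
    Nat.card_eq_fintype_card, ← Fintype.card_sum]
  exact Fintype.card_congr Equiv.subtypeSum

end Matrix

theorem sympForm_mul_self (n : ℕ) : sympForm n * sympForm n = -1 := by
  simp [sympForm, fromBlocks_multiply, ← fromBlocks_one, fromBlocks_neg]

theorem isUnit_det_sympForm (n : ℕ) : IsUnit (sympForm n).det :=
  isUnit_det_of_right_inverse (B := -sympForm n) <| by
    rw [Matrix.mul_neg, sympForm_mul_self, neg_neg]

theorem map_ofReal_fromBlocks_diagonal_sub_I_smul_sympForm {n : ℕ} (D : Fin n → ℝ) :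
    (fromBlocks (diagonal D) 0 0 (diagonal D)).map ofReal - I • (sympForm n).map ofReal =
      fromBlocks (diagonal fun j => (D j : ℂ)) (-(I • 1)) (I • 1)
        (diagonal fun j => (D j : ℂ)) := by
  rw [sympForm, fromBlocks_map, fromBlocks_map, fromBlocks_smul, sub_eq_add_neg, fromBlocks_neg,
    fromBlocks_add]
  simp [Matrix.map_neg _ ofReal_neg]

theorem rank_gamma_sub_i_sigma_general (n : ℕ)
    (γ S : Matrix (Fin n ⊕ Fin n) (Fin n ⊕ Fin n) ℝ) (D : Fin n → ℝ)
    (hS : S * sympForm n * Sᵀ = sympForm n)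
    (hW : S * γ * Sᵀ = Matrix.fromBlocks (Matrix.diagonal D) 0 0 (Matrix.diagonal D))
    (hD : ∀ j, 1 ≤ D j) :
    ((γ.map Complex.ofReal) - Complex.I • ((sympForm n).map Complex.ofReal)).rank =
      2 * n - Nat.card {j : Fin n // D j = 1} := by
  have hSc : IsUnit (S.map ofReal).det :=
    ofRealHom.map_det S ▸ (isUnit_det_of_mul_mul_transpose_eq (isUnit_det_sympForm n) hS).map _
  rw [← rank_mul_mul_transpose_of_isUnit_det _ _ hSc, map_ofReal_mul_sub_I_smul_mul_transpose, hW,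
    hS, map_ofReal_fromBlocks_diagonal_sub_I_smul_sympForm, rank_fromBlocks_diagonal_I]
  have hplus : Nat.card {j // (D j : ℂ) + 1 ≠ 0} = n := by
    have hne (j : Fin n) : (D j : ℂ) + 1 ≠ 0 := by
      exact_mod_cast (by linarith [hD j] : (0 : ℝ) < D j + 1).ne'
    rw [Nat.card_congr (Equiv.subtypeUnivEquiv hne), Nat.card_fin]
  have hminus :
      Nat.card {j // (D j : ℂ) - 1 ≠ 0} + Nat.card {j : Fin n // D j = 1} = n := by
    have hne (j : Fin n) : (D j : ℂ) - 1 ≠ 0 ↔ ¬D j = 1 := by simp [sub_eq_zero]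
    rw [Nat.card_congr (Equiv.subtypeEquivRight hne), add_comm, ← Nat.card_sum,
      Nat.card_congr (Equiv.sumCompl _), Nat.card_fin]
  omega

/-- Let `γ` be real symmetric with `γ ≥ iσ_{2n}` and let
`S γ Sᵀ = diag(D, D)` be its Williamson normal form (`S` symplectic, `D_j ≥ 1` the
symplectic eigenvalues of `γ`).  Then `rank(γ - iσ_{2n}) = 2n - #₁(D)`, where `#₁(D)` is
the number of unit symplectic eigenvalues; equivalently `dim ker(γ - iσ_{2n}) = #₁(D)`. -/
theorem rank_gamma_sub_i_sigma (n : ℕ)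
    (γ S : Matrix (Fin n ⊕ Fin n) (Fin n ⊕ Fin n) ℝ) (D : Fin n → ℝ)
    (hγ : γ.IsSymm)
    (h : ((γ.map Complex.ofReal) - Complex.I • ((sympForm n).map Complex.ofReal)).PosSemidef)
    (hS : S * sympForm n * Sᵀ = sympForm n)
    (hW : S * γ * Sᵀ = Matrix.fromBlocks (Matrix.diagonal D) 0 0 (Matrix.diagonal D))
    (hD : ∀ j, 1 ≤ D j) :
    ((γ.map Complex.ofReal) - Complex.I • ((sympForm n).map Complex.ofReal)).rank =
      2 * n - Nat.card {j : Fin n // D j = 1} :=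
  rank_gamma_sub_i_sigma_general n γ S D hS hW hD
end
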